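/- arXiv:math/0303169 — 2 statements merged into one kernel-verified Lean document; each statement's English description precedes it below -/
import Mathlib

section
/- Let 1 ≤ l ≤ n be integers and r ∈ ℚ[x_1,...,x_l] a polynomial, viewed in ℚ[x_1,...,x_n]. If R̃_n ∈ ℚ[x_1,...,x_n] satisfies V · R̃_n = ũ_n, then R̃_n is supersymmetric. -/
open MvPolynomial Finset

/-- The Vandermonde polynomial `V = ∏_{1 ≤ i < j ≤ n} (x_i - x_j)`. -/
noncomputable def vand (n : ℕ) : MvPolynomial (Fin n) ℚ :=
  ∏ p ∈ Finset.univ.filter (fun p : Fin n × Fin n => p.1 < p.2), (X p.1 - X p.2)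

/-- `∏_{1 ≤ i ≤ l, i < j ≤ n} (x_i + x_j)`. -/
noncomputable def prodPlus (n l : ℕ) : MvPolynomial (Fin n) ℚ :=
  ∏ p ∈ Finset.univ.filter (fun p : Fin n × Fin n => (p.1 : ℕ) < l ∧ p.1 < p.2),
    (X p.1 + X p.2)

/-- `∏_{l < i < j ≤ n} (x_i - x_j)`. -/
noncomputable def prodMinus (n l : ℕ) : MvPolynomial (Fin n) ℚ :=
  ∏ p ∈ Finset.univ.filter (fun p : Fin n × Fin n => l ≤ (p.1 : ℕ) ∧ p.1 < p.2),
    (X p.1 - X p.2)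

/-- The signed symmetrization `∑_{ω ∈ S(n)} sgn(ω) · f(x_{ω(1)}, …, x_{ω(n)})`. -/
noncomputable def antiSum (n : ℕ) (f : MvPolynomial (Fin n) ℚ) : MvPolynomial (Fin n) ℚ :=
  ∑ ω : Equiv.Perm (Fin n), ((Equiv.Perm.sign ω : ℤ) : ℚ) • rename (⇑ω) f

/-- A polynomial `f(x_1, …, x_n)` is supersymmetric if it is symmetric and, for all
`1 ≤ i < j ≤ n`, the result of substituting `x_i = t`, `x_j = -t` does not depend on `t`. -/
def IsSupersymmetric {n : ℕ} (f : MvPolynomial (Fin n) ℚ) : Prop :=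
  (∀ ω : Equiv.Perm (Fin n), rename (⇑ω) f = f) ∧
  (∀ i j : Fin n, i < j → ∀ s t : ℚ,
    aeval (fun k : Fin n => if k = i then C s else if k = j then C (-s) else X k) f =
    aeval (fun k : Fin n => if k = i then C t else if k = j then C (-t) else X k) f)

/-! ### Auxiliary lemmas -/

theorem prod_pairs_eq {M : Type*} [CommMonoid M] (n : ℕ) (f : Fin n × Fin n → M) :
    ∏ p ∈ Finset.univ.filter (fun p : Fin n × Fin n => p.1 < p.2), f p
      = ∏ i : Fin n, ∏ j ∈ Ioi i, f (i, j) := by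
  rw [← Finset.prod_sigma univ (fun i => Ioi i) (fun x => f (x.1, x.2))]
  refine (Finset.prod_nbij (fun x : Σ _ : Fin n, Fin n => (x.1, x.2)) ?_ ?_ ?_ ?_).symm
  · rintro ⟨a,b⟩ h; simp only [Finset.mem_sigma, Finset.mem_Ioi] at h
    simp [h.2]
  · rintro ⟨a,b⟩ - ⟨c,d⟩ - h; simpa using h
  · rintro ⟨a,b⟩ h
    simp only [Finset.coe_filter, Set.mem_setOf_eq, Finset.mem_univ, true_and] at h
    exact ⟨⟨a,b⟩, by simp [h], rfl⟩
  · intros; rfl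

theorem prod_sub_eq_det {R : Type*} [CommRing R] {n : ℕ} (v : Fin n → R) :
    ∏ p ∈ Finset.univ.filter (fun p : Fin n × Fin n => p.1 < p.2), (v p.1 - v p.2)
      = (∏ i : Fin n, (-1 : R) ^ (Ioi i).card) * (Matrix.vandermonde v).det := by
  rw [prod_pairs_eq, Matrix.det_vandermonde, ← Finset.prod_mul_distrib]
  refine Finset.prod_congr rfl fun i _ => ?_
  rw [← Finset.prod_const, ← Finset.prod_mul_distrib]
  exact Finset.prod_congr rfl fun j _ => by ring

theorem rename_vand (n : ℕ) (σ : Equiv.Perm (Fin n)) :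
    rename (⇑σ) (vand n) = ((Equiv.Perm.sign σ : ℤ) : ℚ) • vand n := by
  have h1 : rename (⇑σ) (vand n)
      = ∏ p ∈ Finset.univ.filter (fun p : Fin n × Fin n => p.1 < p.2),
          ((fun i => X (σ i)) p.1 - (fun i => X (σ i)) p.2) := by
    simp [vand, map_prod]
  have h2 : Matrix.vandermonde (fun i => (X (σ i) : MvPolynomial (Fin n) ℚ))
      = (Matrix.vandermonde (fun i => (X i : MvPolynomial (Fin n) ℚ))).submatrix σ id := by
    ext i j; simp [Matrix.vandermonde]
  rw [h1, prod_sub_eq_det (fun i => X (σ i)), h2, Matrix.det_permute, vand,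
    prod_sub_eq_det (fun i => (X i : MvPolynomial (Fin n) ℚ))]
  rw [smul_eq_C_mul, ← map_intCast (C : ℚ →+* MvPolynomial (Fin n) ℚ) ((Equiv.Perm.sign σ : ℤ))]
  ring

theorem rename_antiSum (n : ℕ) (σ : Equiv.Perm (Fin n)) (f : MvPolynomial (Fin n) ℚ) :
    rename (⇑σ) (antiSum n f) = ((Equiv.Perm.sign σ : ℤ) : ℚ) • antiSum n f := by
  unfold antiSum
  rw [map_sum, Finset.smul_sum]
  have : ∀ ω : Equiv.Perm (Fin n),
      rename (⇑σ) (((Equiv.Perm.sign ω : ℤ) : ℚ) • rename (⇑ω) f)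
        = ((Equiv.Perm.sign σ : ℤ) : ℚ) • ((Equiv.Perm.sign (σ * ω) : ℤ) : ℚ) • rename (⇑(σ * ω)) f := by
    intro ω
    have hc : (⇑σ ∘ ⇑ω) = ⇑(σ * ω) := rfl
    rw [map_smul, rename_rename, hc, smul_smul]
    congr 1
    push_cast [Equiv.Perm.sign_mul]
    rcases Int.units_eq_one_or (Equiv.Perm.sign σ) with h | h <;> simp [h]
  rw [Finset.sum_congr rfl (fun ω _ => this ω)]
  exact Fintype.sum_equiv (Equiv.mulLeft σ) _ _ (fun ω => by rw [Equiv.coe_mulLeft])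

theorem vand_ne_zero (n : ℕ) : vand n ≠ 0 := by
  unfold vand
  rw [Finset.prod_ne_zero_iff]
  intro p hp
  simp only [Finset.mem_filter, Finset.mem_univ, true_and] at hp
  exact sub_ne_zero.mpr fun h => (ne_of_lt hp) (X_injective h)

section Aux
variable {n : ℕ} (i j : Fin n)

/-- substitution `x_i = T`, `x_j = -T`, `x_k = C x_k`. -/
noncomputable def phiF : Fin n → Polynomial (MvPolynomial (Fin n) ℚ) :=
  fun k => if k = i then Polynomial.X else if k = j then -Polynomial.X else Polynomial.C (X k)

def wt : Fin n → ℕ := fun k => if k = i ∨ k = j then 1 else 0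

lemma wt_le_one (k : Fin n) : wt i j k ≤ 1 := by unfold wt; split_ifs <;> norm_num

lemma phiF_natDegree_le (k : Fin n) : (phiF i j k).natDegree ≤ wt i j k := by
  unfold phiF wt
  split_ifs <;> simp_all [Polynomial.natDegree_X_le]

lemma phiF_sub_le (a b : Fin n) :
    (phiF i j a - phiF i j b).natDegree ≤ max (wt i j a) (wt i j b) :=
  (Polynomial.natDegree_sub_le _ _).trans
    (max_le_max (phiF_natDegree_le i j a) (phiF_natDegree_le i j b))

lemma phiF_add_le (a b : Fin n) :
    (phiF i j a + phiF i j b).natDegree ≤ max (wt i j a) (wt i j b) :=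
  (Polynomial.natDegree_add_le _ _).trans
    (max_le_max (phiF_natDegree_le i j a) (phiF_natDegree_le i j b))

lemma phiF_coeff_one (k : Fin n) :
    (phiF i j k).coeff 1 = if k = i then 1 else if k = j then -1 else 0 := by
  unfold phiF; split_ifs <;> simp

lemma phiF_sub_coeff_one (hij : i ≠ j) {a b : Fin n} (hab : a ≠ b)
    (hs : a = i ∨ a = j ∨ b = i ∨ b = j) :
    (phiF i j a - phiF i j b).coeff 1 ≠ 0 := by
  rw [Polynomial.coeff_sub, phiF_coeff_one, phiF_coeff_one]
  split_ifs <;> simp_all <;> norm_num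

lemma phiF_sub_ne (hij : i ≠ j) {a b : Fin n} (hab : a ≠ b) :
    phiF i j a - phiF i j b ≠ 0 := by
  by_cases hs : a = i ∨ a = j ∨ b = i ∨ b = j
  · exact fun h0 => phiF_sub_coeff_one i j hij hab hs (by rw [h0]; simp)
  · push_neg at hs
    obtain ⟨h1, h2, h3, h4⟩ := hs
    unfold phiF
    rw [if_neg h1, if_neg h2, if_neg h3, if_neg h4, ← Polynomial.C_sub]
    exact Polynomial.C_ne_zero.mpr (sub_ne_zero.mpr fun h => hab (X_injective h))

lemma phiF_sub_deg (hij : i ≠ j) {a b : Fin n} (hab : a ≠ b) :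
    (phiF i j a - phiF i j b).natDegree = max (wt i j a) (wt i j b) := by
  refine le_antisymm (phiF_sub_le i j a b) ?_
  by_cases hs : a = i ∨ a = j ∨ b = i ∨ b = j
  · have h1 : 1 ≤ (phiF i j a - phiF i j b).natDegree :=
      Polynomial.le_natDegree_of_ne_zero (phiF_sub_coeff_one i j hij hab hs)
    exact le_trans (max_le (wt_le_one i j a) (wt_le_one i j b)) h1
  · push_neg at hs
    obtain ⟨h1, h2, h3, h4⟩ := hs
    simp [wt, h1, h2, h3, h4]

lemma aeval_polyC {σ : Type*} (g : σ → MvPolynomial (Fin n) ℚ) (r : MvPolynomial σ ℚ) :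
    aeval (fun k => Polynomial.C (g k)) r = Polynomial.C (aeval g r) := by
  induction r using MvPolynomial.induction_on with
  | C q => simp [Polynomial.algebraMap_apply]
  | add p q hp hq => simp [hp, hq]
  | mul_X p k hp => simp [hp]

/-- sum over sorted pairs is invariant under a permutation (for symmetric summand). -/
lemma sum_pairs_perm (ω : Equiv.Perm (Fin n)) (w : Fin n → ℕ) :
    ∑ p ∈ Finset.univ.filter (fun p : Fin n × Fin n => p.1 < p.2), max (w (ω p.1)) (w (ω p.2))
      = ∑ p ∈ Finset.univ.filter (fun p : Fin n × Fin n => p.1 < p.2), max (w p.1) (w p.2) := by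
  have key : ∀ (σ : Equiv.Perm (Fin n)) (p : Fin n × Fin n), p.1 < p.2 →
      (if σ p.1 < σ p.2 then (σ p.1, σ p.2) else (σ p.2, σ p.1)).1
        < (if σ p.1 < σ p.2 then (σ p.1, σ p.2) else (σ p.2, σ p.1)).2 := by
    intro σ p hp
    split_ifs with h
    · exact h
    · exact lt_of_le_of_ne (not_lt.mp h) (fun he => (ne_of_lt hp) (σ.injective he.symm))
  refine Finset.sum_nbij'
    (fun p => if ω p.1 < ω p.2 then (ω p.1, ω p.2) else (ω p.2, ω p.1))
    (fun p => if ω⁻¹ p.1 < ω⁻¹ p.2 then (ω⁻¹ p.1, ω⁻¹ p.2) else (ω⁻¹ p.2, ω⁻¹ p.1))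
    ?_ ?_ ?_ ?_ ?_
  · intro p hp
    simp only [Finset.mem_filter, Finset.mem_univ, true_and] at hp ⊢
    exact key ω p hp
  · intro p hp
    simp only [Finset.mem_filter, Finset.mem_univ, true_and] at hp ⊢
    exact key ω⁻¹ p hp
  · intro p hp
    simp only [Finset.mem_filter, Finset.mem_univ, true_and] at hp
    split_ifs with h1 h2 h2 <;>
      simp_all [Prod.ext_iff, Equiv.Perm.inv_def]
    exact absurd h2 (asymm hp)
  · intro p hp
    simp only [Finset.mem_filter, Finset.mem_univ, true_and] at hp
    split_ifs with h1 h2 h2 <;>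
      simp_all [Prod.ext_iff, Equiv.Perm.inv_def]
    exact absurd h2 (asymm hp)
  · intro p hp
    split_ifs with h <;> simp [max_comm]

lemma aeval_phiF_vand (hij : i ≠ j) :
    aeval (phiF i j) (vand n)
      = ∏ p ∈ Finset.univ.filter (fun p : Fin n × Fin n => p.1 < p.2),
          (phiF i j p.1 - phiF i j p.2) := by
  unfold vand
  rw [map_prod]
  simp

lemma vand_phi_ne (hij : i ≠ j) : aeval (phiF i j) (vand n) ≠ 0 := by
  rw [aeval_phiF_vand i j hij, Finset.prod_ne_zero_iff]
  intro p hp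
  simp only [Finset.mem_filter, Finset.mem_univ, true_and] at hp
  exact phiF_sub_ne i j hij (ne_of_lt hp)

lemma vand_phi_deg (hij : i ≠ j) :
    (aeval (phiF i j) (vand n)).natDegree
      = ∑ p ∈ Finset.univ.filter (fun p : Fin n × Fin n => p.1 < p.2),
          max (wt i j p.1) (wt i j p.2) := by
  rw [aeval_phiF_vand i j hij,
    Polynomial.natDegree_prod _ _ (fun p hp => by
      simp only [Finset.mem_filter, Finset.mem_univ, true_and] at hp
      exact phiF_sub_ne i j hij (ne_of_lt hp))]
  refine Finset.sum_congr rfl fun p hp => ?_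
  simp only [Finset.mem_filter, Finset.mem_univ, true_and] at hp
  exact phiF_sub_deg i j hij (ne_of_lt hp)

end Aux

/-- The key degree bound for each term of the antisymmetrization. -/
lemma term_deg_le (n l : ℕ) (hln : l ≤ n) (r : MvPolynomial (Fin l) ℚ)
    (i j : Fin n) (hij : i ≠ j) (ω : Equiv.Perm (Fin n)) :
    (aeval (phiF i j)
        (rename (⇑ω) (rename (Fin.castLE hln) r * prodPlus n l * prodMinus n l))).natDegree
      ≤ (aeval (phiF i j) (vand n)).natDegree := by
  have hren : aeval (phiF i j)
        (rename (⇑ω) (rename (Fin.castLE hln) r * prodPlus n l * prodMinus n l))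
      = aeval (fun k => phiF i j (ω k)) (rename (Fin.castLE hln) r)
        * aeval (fun k => phiF i j (ω k)) (prodPlus n l)
        * aeval (fun k => phiF i j (ω k)) (prodMinus n l) := by
    rw [aeval_rename, map_mul, map_mul]
    rfl
  rw [hren]
  by_cases hcase : l ≤ ((ω⁻¹ i : Fin n) : ℕ) ∧ l ≤ ((ω⁻¹ j : Fin n) : ℕ)
  · -- the `r` part is a constant polynomial
    have hr : aeval (fun k => phiF i j (ω k)) (rename (Fin.castLE hln) r)
        = Polynomial.C (aeval (fun k => X (ω (Fin.castLE hln k))) r) := by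
      rw [aeval_rename]
      have he : ((fun k => phiF i j (ω k)) ∘ Fin.castLE hln)
          = fun k : Fin l => Polynomial.C (X (ω (Fin.castLE hln k))) := by
        funext k
        have hki : ω (Fin.castLE hln k) ≠ i := by
          intro h
          have h2 : ((Fin.castLE hln k : Fin n) : ℕ) = ((ω⁻¹ i : Fin n) : ℕ) := by
            rw [show (ω⁻¹ i : Fin n) = Fin.castLE hln k from by rw [← h]; simp]
          have h3 : (k : ℕ) < l := k.isLt
          simp only [Fin.coe_castLE] at h2
          omega
        have hkj : ω (Fin.castLE hln k) ≠ j := by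
          intro h
          have h2 : ((Fin.castLE hln k : Fin n) : ℕ) = ((ω⁻¹ j : Fin n) : ℕ) := by
            rw [show (ω⁻¹ j : Fin n) = Fin.castLE hln k from by rw [← h]; simp]
          have h3 : (k : ℕ) < l := k.isLt
          simp only [Fin.coe_castLE] at h2
          omega
        simp only [Function.comp_apply, phiF, if_neg hki, if_neg hkj]
      rw [he, aeval_polyC]
    have hP : ((aeval fun k => phiF i j (ω k)) (prodPlus n l)).natDegree
        ≤ ∑ p ∈ Finset.univ.filter (fun p : Fin n × Fin n => (p.1 : ℕ) < l ∧ p.1 < p.2),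
            max (wt i j (ω p.1)) (wt i j (ω p.2)) := by
      unfold prodPlus
      rw [map_prod]
      refine le_trans (Polynomial.natDegree_prod_le _ _) (Finset.sum_le_sum fun p _ => ?_)
      rw [map_add, aeval_X, aeval_X]
      exact phiF_add_le i j (ω p.1) (ω p.2)
    have hM : ((aeval fun k => phiF i j (ω k)) (prodMinus n l)).natDegree
        ≤ ∑ p ∈ Finset.univ.filter (fun p : Fin n × Fin n => l ≤ (p.1 : ℕ) ∧ p.1 < p.2),
            max (wt i j (ω p.1)) (wt i j (ω p.2)) := by
      unfold prodMinus
      rw [map_prod]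
      refine le_trans (Polynomial.natDegree_prod_le _ _) (Finset.sum_le_sum fun p _ => ?_)
      rw [map_sub, aeval_X, aeval_X]
      exact phiF_sub_le i j (ω p.1) (ω p.2)
    have hsplit : (∑ p ∈ Finset.univ.filter (fun p : Fin n × Fin n => (p.1 : ℕ) < l ∧ p.1 < p.2),
            max (wt i j (ω p.1)) (wt i j (ω p.2)))
        + (∑ p ∈ Finset.univ.filter (fun p : Fin n × Fin n => l ≤ (p.1 : ℕ) ∧ p.1 < p.2),
            max (wt i j (ω p.1)) (wt i j (ω p.2)))
        = ∑ p ∈ Finset.univ.filter (fun p : Fin n × Fin n => p.1 < p.2),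
            max (wt i j (ω p.1)) (wt i j (ω p.2)) := by
      rw [show (Finset.univ.filter (fun p : Fin n × Fin n => (p.1 : ℕ) < l ∧ p.1 < p.2))
            = (Finset.univ.filter (fun p : Fin n × Fin n => p.1 < p.2)).filter
                (fun p => (p.1 : ℕ) < l) from by
          ext p; simp only [Finset.mem_filter, Finset.mem_univ, true_and]; tauto,
        show (Finset.univ.filter (fun p : Fin n × Fin n => l ≤ (p.1 : ℕ) ∧ p.1 < p.2))
            = (Finset.univ.filter (fun p : Fin n × Fin n => p.1 < p.2)).filter
                (fun p => ¬ (p.1 : ℕ) < l) from by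
          ext p; simp only [Finset.mem_filter, Finset.mem_univ, true_and, not_lt]; tauto]
      exact Finset.sum_filter_add_sum_filter_not _ _ _
    have hperm : (∑ p ∈ Finset.univ.filter (fun p : Fin n × Fin n => p.1 < p.2),
            max (wt i j (ω p.1)) (wt i j (ω p.2)))
        = (aeval (phiF i j) (vand n)).natDegree := by
      rw [vand_phi_deg i j hij]
      exact sum_pairs_perm ω (wt i j)
    refine le_trans (Polynomial.natDegree_mul_le) ?_
    refine le_trans (Nat.add_le_add_right (Polynomial.natDegree_mul_le) _) ?_
    rw [hr, Polynomial.natDegree_C, zero_add]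
    exact le_trans (add_le_add hP hM) (le_of_eq (hsplit.trans hperm))
  · -- the term vanishes
    have hzero : (aeval fun k => phiF i j (ω k)) (prodPlus n l) = 0 := by
      unfold prodPlus
      rw [map_prod]
      rw [not_and_or, not_le, not_le] at hcase
      have hab : (ω⁻¹ i : Fin n) ≠ ω⁻¹ j := by
        intro h
        exact hij (by simpa using congrArg ω h)
      have hwai : ω (ω⁻¹ i) = i := by simp
      have hwbj : ω (ω⁻¹ j) = j := by simp
      have hval : phiF i j i + phiF i j j = 0 := by
        unfold phiF
        rw [if_pos rfl, if_neg (Ne.symm hij), if_pos rfl]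
        ring
      rcases lt_or_gt_of_ne hab with hlt | hgt
      · refine Finset.prod_eq_zero (i := ((ω⁻¹ i : Fin n), (ω⁻¹ j : Fin n))) ?_ ?_
        · simp only [Finset.mem_filter, Finset.mem_univ, true_and]
          refine ⟨?_, hlt⟩
          have hv : ((ω⁻¹ i : Fin n) : ℕ) < ((ω⁻¹ j : Fin n) : ℕ) := hlt
          omega
        · rw [map_add, aeval_X, aeval_X]
          dsimp only
          rw [hwai, hwbj, hval]
      · refine Finset.prod_eq_zero (i := ((ω⁻¹ j : Fin n), (ω⁻¹ i : Fin n))) ?_ ?_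
        · simp only [Finset.mem_filter, Finset.mem_univ, true_and]
          refine ⟨?_, hgt⟩
          have hv : ((ω⁻¹ j : Fin n) : ℕ) < ((ω⁻¹ i : Fin n) : ℕ) := hgt
          omega
        · rw [map_add, aeval_X, aeval_X]
          dsimp only
          rw [hwai, hwbj, add_comm, hval]
    rw [hzero, mul_zero, zero_mul]
    simp

set_option maxHeartbeats 1000000 in
set_option synthInstance.maxHeartbeats 200000 in
/-- the quotient `R̃_n = ũ_n / V` is a supersymmetric polynomial. -/
theorem quotient_isSupersymmetric
    (n l : ℕ) (hl : 1 ≤ l) (hln : l ≤ n) (r : MvPolynomial (Fin l) ℚ)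
    (Rtil : MvPolynomial (Fin n) ℚ)
    (hR : vand n * Rtil =
      antiSum n (rename (Fin.castLE hln) r * prodPlus n l * prodMinus n l)) :
    IsSupersymmetric Rtil := by
  constructor
  · intro σ
    have h := congrArg (rename (⇑σ)) hR
    rw [map_mul, rename_vand, rename_antiSum, ← hR, smul_mul_assoc] at h
    have hs : ((Equiv.Perm.sign σ : ℤ) : ℚ) ≠ 0 := by
      rcases Int.units_eq_one_or (Equiv.Perm.sign σ) with hh | hh <;> simp [hh]
    have h2 : vand n * rename (⇑σ) Rtil = vand n * Rtil := by
      have h3 := congrArg (fun x : MvPolynomial (Fin n) ℚ =>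
        ((Equiv.Perm.sign σ : ℤ) : ℚ)⁻¹ • x) h
      simpa [smul_smul, inv_mul_cancel₀ hs] using h3
    exact mul_left_cancel₀ (vand_ne_zero n) h2
  · intro i j hij s t
    have hij' : i ≠ j := ne_of_lt hij
    have key : ∀ (c : ℚ) (f : MvPolynomial (Fin n) ℚ),
        aeval (fun k : Fin n => if k = i then C c else if k = j then C (-c) else X k) f
          = Polynomial.eval (C c : MvPolynomial (Fin n) ℚ) (aeval (phiF i j) f) := by
      intro c f
      induction f using MvPolynomial.induction_on with
      | C q => simp [Polynomial.algebraMap_apply]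
      | add p q hp hq => rw [map_add, map_add, Polynomial.eval_add, hp, hq]
      | mul_X p k hp =>
        rw [map_mul, map_mul, Polynomial.eval_mul, ← hp]
        congr 1
        simp only [aeval_X, phiF]
        split_ifs <;> simp
    obtain ⟨g, hg⟩ : ∃ g, aeval (phiF i j) Rtil = Polynomial.C g := by
      rcases eq_or_ne (aeval (phiF i j) Rtil) 0 with h0 | h0
      · exact ⟨0, by simp [h0]⟩
      · have hmul := congrArg (aeval (phiF i j)) hR
        rw [map_mul] at hmul
        have hdeg : (aeval (phiF i j)
              (antiSum n (rename (Fin.castLE hln) r * prodPlus n l * prodMinus n l))).natDegree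
            ≤ (aeval (phiF i j) (vand n)).natDegree := by
          unfold antiSum
          rw [map_sum]
          refine Polynomial.natDegree_sum_le_of_forall_le _ _ fun ω _ => ?_
          rw [smul_eq_C_mul, map_mul]
          refine le_trans (Polynomial.natDegree_mul_le) ?_
          have h1 : (aeval (phiF i j)
              (C ((Equiv.Perm.sign ω : ℤ) : ℚ) : MvPolynomial (Fin n) ℚ)).natDegree = 0 := by
            rw [aeval_C, Polynomial.algebraMap_apply, Polynomial.natDegree_C]
          rw [h1, zero_add]
          exact term_deg_le n l hln r i j hij' ω
        rw [← hmul, Polynomial.natDegree_mul (vand_phi_ne i j hij') h0] at hdeg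
        have hz : (aeval (phiF i j) Rtil).natDegree = 0 := by omega
        obtain ⟨g, hg⟩ := Polynomial.natDegree_eq_zero.mp hz
        exact ⟨g, hg.symm⟩
    rw [key s Rtil, key t Rtil, hg]
    simp
end

section
/- For every strict partition μ, P*_μ(μ) = H(μ), where H(μ) = ∏_{t=1}^{l(μ)} μ_t! · ∏_{1≤i<j≤l(μ)} (μ_i+μ_j)/(μ_i−μ_j). -/
open Finset

/-- The falling factorial `(x ↓ k) = x (x-1) ⋯ (x-k+1)`, with `(x ↓ 0) = 1`. -/
def fallQ (x : ℚ) (k : ℕ) : ℚ := ∏ i ∈ Finset.range k, (x - i)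

/-- `μ : ℕ → ℕ` (1-indexed: the parts are `μ 1, μ 2, …`) is a strict partition of
length `l`: its first `l` parts are positive and strictly decreasing, and the
remaining parts are zero. -/
def IsStrictOfLen (l : ℕ) (μ : ℕ → ℕ) : Prop :=
  (∀ i, 1 ≤ i → i ≤ l → 0 < μ i) ∧
  (∀ i j, 1 ≤ i → i < j → j ≤ l → μ j < μ i) ∧
  (∀ i, l < i → μ i = 0)

/-- The rational number `P*_μ(λ)` for strict partitions `μ` (of length `l`) and `λ`
(of length `n ≥ l`), both 1-indexed and extended by zeroes:
`P*_μ(λ) = (1/(n-l)!) ∑_{ω ∈ S(n)} ∏_{i=1}^{l} (λ_{ω(i)} ↓ μ_i) ·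
∏_{1 ≤ i ≤ l, i < j ≤ n} (λ_{ω(i)} + λ_{ω(j)})/(λ_{ω(i)} - λ_{ω(j)})`. -/
noncomputable def PstarEval (n l : ℕ) (μ lam : ℕ → ℕ) : ℚ :=
  (Nat.factorial (n - l) : ℚ)⁻¹ *
    ∑ ω : Equiv.Perm (Fin n),
      (∏ i : Fin n, fallQ (lam ((ω i : ℕ) + 1) : ℚ) (μ ((i : ℕ) + 1))) *
        ∏ p ∈ Finset.univ.filter (fun p : Fin n × Fin n => (p.1 : ℕ) < l ∧ p.1 < p.2),
          (((lam ((ω p.1 : ℕ) + 1) : ℚ) + (lam ((ω p.2 : ℕ) + 1) : ℚ)) /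
            ((lam ((ω p.1 : ℕ) + 1) : ℚ) - (lam ((ω p.2 : ℕ) + 1) : ℚ)))

/-- `H(μ) = ∏_{t=1}^{l(μ)} μ_t! · ∏_{1 ≤ i < j ≤ l(μ)} (μ_i + μ_j)/(μ_i - μ_j)`. -/
noncomputable def Hfun (l : ℕ) (μ : ℕ → ℕ) : ℚ :=
  (∏ t ∈ Finset.Icc 1 l, (Nat.factorial (μ t) : ℚ)) *
    ∏ p ∈ (Finset.Icc 1 l ×ˢ Finset.Icc 1 l).filter (fun p : ℕ × ℕ => p.1 < p.2),
      (((μ p.1 : ℚ) + (μ p.2 : ℚ)) / ((μ p.1 : ℚ) - (μ p.2 : ℚ)))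

lemma fallQ_of_lt {m k : ℕ} (h : m < k) : fallQ (m : ℚ) k = 0 :=
  Finset.prod_eq_zero (Finset.mem_range.2 h) (by simp)

lemma prod_desc (m : ℕ) : ∏ i ∈ Finset.range m, (m - i) = m.factorial := by
  induction m with
  | zero => simp
  | succ n ih =>
    rw [Finset.prod_range_succ']
    simp only [Nat.succ_sub_succ]
    rw [ih, Nat.sub_zero, Nat.factorial_succ, Nat.mul_comm]

lemma fallQ_self (m : ℕ) : fallQ (m : ℚ) m = m.factorial := by
  unfold fallQ
  have : ∀ i ∈ Finset.range m, ((m : ℚ) - i) = ((m - i : ℕ) : ℚ) := by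
    intro i hi
    have : i ≤ m := le_of_lt (Finset.mem_range.1 hi)
    push_cast [Nat.cast_sub this]
    ring
  rw [Finset.prod_congr rfl this, ← Nat.cast_prod, prod_desc]

lemma perm_exists_lt {n : ℕ} (ω : Equiv.Perm (Fin n)) (h : ω ≠ 1) :
    ∃ i : Fin n, (i : ℕ) < (ω i : ℕ) := by
  by_contra hc
  push_neg at hc
  apply h
  have key : ∀ m : ℕ, ∀ i : Fin n, (i : ℕ) = m → ω i = i := by
    intro m
    induction m using Nat.strong_induction_on with
    | _ m ih =>
      intro i him
      have h1 : (ω i : ℕ) ≤ i := hc i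
      rcases lt_or_eq_of_le h1 with h2 | h2
      · exfalso
        have := ih (ω i : ℕ) (him ▸ h2) (ω i) rfl
        have := ω.injective this
        rw [this] at h2
        exact lt_irrefl _ h2
      · exact Fin.ext (h2.trans him ▸ h2)
  ext i
  have := key (i : ℕ) i rfl
  simp [this]

/-- `P*_μ(μ) = H(μ)` for every strict partition `μ`. -/
theorem PstarEval_self (l : ℕ) (μ : ℕ → ℕ) (hμ : IsStrictOfLen l μ) :
    PstarEval l l μ μ = Hfun l μ := by
  unfold PstarEval Hfun
  rw [Nat.sub_self, Nat.factorial_zero, Nat.cast_one, inv_one, one_mul]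
  rw [Finset.sum_eq_single (1 : Equiv.Perm (Fin l))]
  · simp only [Equiv.Perm.one_apply]
    congr 1
    · -- diagonal falling factorials
      simp only [fallQ_self]
      rw [Fin.prod_univ_eq_prod_range (fun i => ((μ (i + 1)).factorial : ℚ))]
      rw [show Finset.Icc 1 l = Finset.Ico 1 (l + 1) by rw [Finset.Ico_add_one_right_eq_Icc],
        Finset.prod_Ico_eq_prod_range]
      simp [Nat.add_comm]
    · -- pair product
      refine Finset.prod_bij
        (fun (p : Fin l × Fin l) _ => (((p.1 : ℕ) + 1), ((p.2 : ℕ) + 1))) ?_ ?_ ?_ ?_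
      · intro p hp
        simp only [Finset.mem_filter, Finset.mem_univ, true_and] at hp
        simp only [Finset.mem_filter, Finset.mem_product, Finset.mem_Icc]
        have h1 := p.1.isLt
        have h2 := p.2.isLt
        have h3 : (p.1 : ℕ) < (p.2 : ℕ) := hp.2
        omega
      · intro a _ b _ hab
        simp only [Prod.mk.injEq] at hab
        have : (a.1 : ℕ) = b.1 := by omega
        have : (a.2 : ℕ) = b.2 := by omega
        ext <;> omega
      · intro q hq
        simp only [Finset.mem_filter, Finset.mem_product, Finset.mem_Icc] at hq
        obtain ⟨⟨⟨h11, h12⟩, h21, h22⟩, hlt⟩ := hq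
        refine ⟨(⟨q.1 - 1, by omega⟩, ⟨q.2 - 1, by omega⟩), ?_, ?_⟩
        · simp only [Finset.mem_filter, Finset.mem_univ, true_and]
          constructor
          · omega
          · simp only [Fin.mk_lt_mk]; omega
        · obtain ⟨q1, q2⟩ := q
          simp only [Prod.mk.injEq]
          simp only at *
          omega
      · intro p _
        rfl
  · intro ω _ hω
    obtain ⟨i, hi⟩ := perm_exists_lt ω hω
    apply mul_eq_zero_of_left
    apply Finset.prod_eq_zero (Finset.mem_univ i)
    apply fallQ_of_lt
    exact hμ.2.1 ((i : ℕ) + 1) ((ω i : ℕ) + 1) (by omega) (by omega)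
      (by have := (ω i).isLt; omega)
  · intro h
    exact absurd (Finset.mem_univ _) h
end
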